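/- arXiv:1704.06760 — 5 statements merged into one kernel-verified Lean document; each statement's English description precedes it below -/
import Mathlib

section
/- For every v ∈ ℝ, the function F_v(ℓ, a) := −v·a + a²/(2σ) + 8ℓ − 2√((4ℓ−a)(4−w)ℓ) is strictly convex on the convex sector D_w := {(ℓ, a) ∈ ℝ² : 0 ≤ ℓw ≤ a ≤ 4ℓ}: for any two distinct points p, q ∈ D_w and any λ ∈ (0,1), F_v(λp + (1−λ)q) < λ·F_v(p) + (1−λ)·F_v(q). -/
/-- The function `F_v(ℓ, a) = −v·a + a²/(2σ) + 8ℓ − 2√((4ℓ−a)(4−w)ℓ)`,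
viewed as a function of the pair `p = (ℓ, a) ∈ ℝ²`. -/
noncomputable def Fv (w σ v : ℝ) (p : ℝ × ℝ) : ℝ :=
  -v * p.2 + p.2 ^ 2 / (2 * σ) + 8 * p.1 - 2 * Real.sqrt ((4 * p.1 - p.2) * (4 - w) * p.1)

lemma sqrt_amgm {a b : ℝ} (ha : 0 ≤ a) (hb : 0 ≤ b) :
    2 * (Real.sqrt a * Real.sqrt b) ≤ a + b := by
  nlinarith [sq_nonneg (Real.sqrt a - Real.sqrt b), Real.sq_sqrt ha, Real.sq_sqrt hb]

lemma sqrt_amgm_strict {a b : ℝ} (ha : 0 ≤ a) (hb : 0 ≤ b) (hab : a ≠ b) :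
    2 * (Real.sqrt a * Real.sqrt b) < a + b := by
  have h : Real.sqrt a - Real.sqrt b ≠ 0 := by
    intro h
    exact hab ((Real.sqrt_inj ha hb).1 (by linarith [sub_eq_zero.1 h]))
  nlinarith [sq_pos_of_ne_zero h, Real.sq_sqrt ha, Real.sq_sqrt hb]

lemma cross_eq {x1 y1 x2 y2 : ℝ} (hx1 : 0 ≤ x1) (hy1 : 0 ≤ y1) (hy2 : 0 ≤ y2) :
    Real.sqrt (x1 * y1) * Real.sqrt (x2 * y2)
      = Real.sqrt (x1 * y2) * Real.sqrt (x2 * y1) := by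
  rw [← Real.sqrt_mul (by positivity), ← Real.sqrt_mul (by positivity)]
  ring_nf

lemma key_sq {x1 y1 x2 y2 l m : ℝ} (hx1 : 0 ≤ x1) (hy1 : 0 ≤ y1)
    (hx2 : 0 ≤ x2) (hy2 : 0 ≤ y2) (hl : 0 ≤ l) (hm : 0 ≤ m) :
    (l * Real.sqrt (x1 * y1) + m * Real.sqrt (x2 * y2)) ^ 2
      ≤ (l * x1 + m * x2) * (l * y1 + m * y2) := by
  have hc := cross_eq hx1 hy1 hy2 (x2 := x2)
  have hag := sqrt_amgm (a := x1 * y2) (b := x2 * y1) (by positivity) (by positivity)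
  have h2 : 2 * (Real.sqrt (x1*y1) * Real.sqrt (x2*y2)) ≤ x1 * y2 + x2 * y1 := by
    rw [hc]; exact hag
  have h3 : 0 ≤ l * m * (x1 * y2 + x2 * y1 - 2 * (Real.sqrt (x1*y1) * Real.sqrt (x2*y2))) :=
    mul_nonneg (mul_nonneg hl hm) (by linarith)
  nlinarith [Real.sq_sqrt (mul_nonneg hx1 hy1), Real.sq_sqrt (mul_nonneg hx2 hy2),
    sq_nonneg l, sq_nonneg m, h3]

lemma key_le {x1 y1 x2 y2 l m : ℝ} (hx1 : 0 ≤ x1) (hy1 : 0 ≤ y1)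
    (hx2 : 0 ≤ x2) (hy2 : 0 ≤ y2) (hl : 0 ≤ l) (hm : 0 ≤ m) :
    l * Real.sqrt (x1 * y1) + m * Real.sqrt (x2 * y2)
      ≤ Real.sqrt ((l * x1 + m * x2) * (l * y1 + m * y2)) := by
  have hL : 0 ≤ l * Real.sqrt (x1 * y1) + m * Real.sqrt (x2 * y2) := by positivity
  rw [Real.le_sqrt hL (by positivity)]
  exact key_sq hx1 hy1 hx2 hy2 hl hm

lemma key_lt {x1 y1 x2 y2 l m : ℝ} (hx1 : 0 ≤ x1) (hy1 : 0 ≤ y1)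
    (hx2 : 0 ≤ x2) (hy2 : 0 ≤ y2) (hl : 0 < l) (hm : 0 < m)
    (hne : x1 * y2 ≠ x2 * y1) :
    l * Real.sqrt (x1 * y1) + m * Real.sqrt (x2 * y2)
      < Real.sqrt ((l * x1 + m * x2) * (l * y1 + m * y2)) := by
  have hL : 0 ≤ l * Real.sqrt (x1 * y1) + m * Real.sqrt (x2 * y2) := by positivity
  rw [show l * Real.sqrt (x1 * y1) + m * Real.sqrt (x2 * y2)
      = Real.sqrt ((l * Real.sqrt (x1 * y1) + m * Real.sqrt (x2 * y2)) ^ 2) from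
    (Real.sqrt_sq hL).symm]
  apply Real.sqrt_lt_sqrt (by positivity)
  have hc := cross_eq hx1 hy1 hy2 (x2 := x2)
  have hag := sqrt_amgm_strict (a := x1 * y2) (b := x2 * y1) (by positivity) (by positivity) hne
  have h2 : 2 * (Real.sqrt (x1*y1) * Real.sqrt (x2*y2)) < x1 * y2 + x2 * y1 := by
    rw [hc]; exact hag
  have h3 : 0 < l * m * (x1 * y2 + x2 * y1 - 2 * (Real.sqrt (x1*y1) * Real.sqrt (x2*y2))) :=
    mul_pos (mul_pos hl hm) (by linarith)
  nlinarith [Real.sq_sqrt (mul_nonneg hx1 hy1), Real.sq_sqrt (mul_nonneg hx2 hy2),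
    sq_nonneg l, sq_nonneg m, h3]

lemma combine (v c a1 a2 L1 L2 S1 S2 Sc lam : ℝ) (hc : 0 < c)
    (hlam : 0 < lam) (hlam1 : lam < 1)
    (hkey : lam * S1 + (1 - lam) * S2 ≤ Sc)
    (hstrict : 0 < c * (lam * (1 - lam) * (a1 - a2) ^ 2) ∨
      lam * S1 + (1 - lam) * S2 < Sc) :
    -v * (lam * a1 + (1 - lam) * a2) + (lam * a1 + (1 - lam) * a2) ^ 2 * c
        + 8 * (lam * L1 + (1 - lam) * L2) - 2 * Sc
      < lam * (-v * a1 + a1 ^ 2 * c + 8 * L1 - 2 * S1)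
        + (1 - lam) * (-v * a2 + a2 ^ 2 * c + 8 * L2 - 2 * S2) := by
  have h0 : (lam * a1 + (1 - lam) * a2) ^ 2 * c
      = lam * (a1 ^ 2 * c) + (1 - lam) * (a2 ^ 2 * c)
        - c * (lam * (1 - lam) * (a1 - a2) ^ 2) := by ring
  have hnn : 0 ≤ c * (lam * (1 - lam) * (a1 - a2) ^ 2) :=
    mul_nonneg hc.le (mul_nonneg (mul_nonneg hlam.le (by linarith)) (sq_nonneg _))
  rcases hstrict with h | h
  · nlinarith [h]
  · nlinarith [h, hnn]

/-- for every `v ∈ ℝ`, `F_v` is strictly convex on the convex sector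
`D_w = {(ℓ, a) : 0 ≤ ℓw ≤ a ≤ 4ℓ}`. -/
theorem Fv_strictConvexOn (w σ : ℝ) (hw0 : 0 < w) (hw4 : w < 4) (hσ : 0 < σ) (v : ℝ) :
    StrictConvexOn ℝ {p : ℝ × ℝ | 0 ≤ p.1 * w ∧ p.1 * w ≤ p.2 ∧ p.2 ≤ 4 * p.1}
      (Fv w σ v) := by
  constructor
  · rintro ⟨l1, a1⟩ ⟨h1, h2, h3⟩ ⟨l2, a2⟩ ⟨h4, h5, h6⟩ s t hs ht hst
    refine ⟨?_, ?_, ?_⟩ <;>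
      simp only [Prod.fst_add, Prod.snd_add, Prod.smul_fst, Prod.smul_snd, smul_eq_mul] <;>
      nlinarith [mul_nonneg hs h1, mul_nonneg ht h4,
        mul_le_mul_of_nonneg_left h2 hs, mul_le_mul_of_nonneg_left h5 ht,
        mul_le_mul_of_nonneg_left h3 hs, mul_le_mul_of_nonneg_left h6 ht]
  · rintro ⟨l1, a1⟩ ⟨h1, h2, h3⟩ ⟨l2, a2⟩ ⟨h4, h5, h6⟩ hne s t hs ht hst
    have ht' : t = 1 - s := by linarith
    subst ht'
    have hs1 : s < 1 := by linarith
    -- nonnegativity facts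
    have hl1 : 0 ≤ l1 := by
      by_contra h; push_neg at h; nlinarith
    have hl2 : 0 ≤ l2 := by
      by_contra h; push_neg at h; nlinarith
    have hx1 : (0:ℝ) ≤ 4 * l1 - a1 := by simpa using h3
    have hx2 : (0:ℝ) ≤ 4 * l2 - a2 := by simpa using h6
    have hy1 : (0:ℝ) ≤ (4 - w) * l1 := mul_nonneg (by linarith) hl1
    have hy2 : (0:ℝ) ≤ (4 - w) * l2 := mul_nonneg (by linarith) hl2
    simp only [Fv, Prod.fst_add, Prod.snd_add, Prod.smul_fst, Prod.smul_snd, smul_eq_mul,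
      div_eq_mul_inv]
    rw [show (4 * (s * l1 + (1 - s) * l2) - (s * a1 + (1 - s) * a2)) * (4 - w)
          * (s * l1 + (1 - s) * l2)
        = (s * (4 * l1 - a1) + (1 - s) * (4 * l2 - a2))
          * (s * ((4 - w) * l1) + (1 - s) * ((4 - w) * l2)) from by ring,
      show (4 * l1 - a1) * (4 - w) * l1 = (4 * l1 - a1) * ((4 - w) * l1) from by ring,
      show (4 * l2 - a2) * (4 - w) * l2 = (4 * l2 - a2) * ((4 - w) * l2) from by ring]
    have hc : (0:ℝ) < (2 * σ)⁻¹ := by positivity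
    by_cases hA : a1 = a2
    · -- same second coordinate: use strict concavity of the sqrt part
      have hlne : l1 ≠ l2 := fun h => hne (by rw [h, hA])
      have ha1ne : a1 ≠ 0 := by
        intro h0
        have h2' : l1 * w ≤ a1 := h2
        have h5' : l2 * w ≤ a2 := h5
        have h1' : 0 ≤ l1 * w := h1
        have h4' : 0 ≤ l2 * w := h4
        have e1 : l1 * w = 0 := le_antisymm (by linarith) h1'
        have e2 : l2 * w = 0 := le_antisymm (by rw [← hA] at h5'; linarith) h4'
        have hl10 : l1 = 0 := (mul_eq_zero.1 e1).resolve_right hw0.ne'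
        have hl20 : l2 = 0 := (mul_eq_zero.1 e2).resolve_right hw0.ne'
        exact hlne (hl10.trans hl20.symm)
      have hprodne : (4 * l1 - a1) * ((4 - w) * l2) ≠ (4 * l2 - a2) * ((4 - w) * l1) := by
        intro heq
        have h0 : (4 - w) * a1 * (l1 - l2) = 0 := by
          linear_combination heq + (4 - w) * l1 * hA
        have h4w : (4:ℝ) - w ≠ 0 := by linarith
        rcases mul_eq_zero.1 h0 with h' | h'
        · rcases mul_eq_zero.1 h' with h'' | h''
          · exact h4w h''
          · exact ha1ne h''
        · exact hlne (by linarith [sub_eq_zero.1 h'])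
      exact combine v _ a1 a2 l1 l2 _ _ _ s hc hs hs1
        (key_le hx1 hy1 hx2 hy2 hs.le (by linarith))
        (Or.inr (key_lt hx1 hy1 hx2 hy2 hs (by linarith) hprodne))
    · -- different second coordinates: use the quadratic term
      exact combine v _ a1 a2 l1 l2 _ _ _ s hc hs hs1
        (key_le hx1 hy1 hx2 hy2 hs.le (by linarith))
        (Or.inl (mul_pos hc (mul_pos (mul_pos hs (by linarith))
          (sq_pos_of_ne_zero (sub_ne_zero.2 hA)))))
end

section
/- For every integer ℓ with ℓ > ℓ* and every a ∈ [ℓw, 4(ℓ−1)], the type-1 stack is never better than the type-2 stack of the same area: τ¹_ℓ(a) ≥ τ²_ℓ(a); explicitly, if r ∈ [0,1] is determined by (ℓ−1)(4−(4−w)r²) + w·r² = a, then (ℓ−1)(8−2r(4−w)) + 2rw ≥ 8ℓ − 2√((4ℓ−a)(4−w)ℓ). -/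
/-- for `ℓ > ℓ* = 4/(4−w)` and `a ∈ [ℓw, 4(ℓ−1)]`, the type-1 stack of
`ℓ` layers and area `a` (radius `r ∈ [0,1]` determined by
`(ℓ−1)(4−(4−w)r²) + w·r² = a`) has surface tension at least that of the type-2 stack
of the same area: `(ℓ−1)(8−2r(4−w)) + 2rw ≥ 8ℓ − 2√((4ℓ−a)(4−w)ℓ)`. -/
theorem type1_never_beats_type2 (w σ : ℝ) (hw0 : 0 < w) (hw4 : w < 4) (hσ : 0 < σ)
    (hnd : ∀ n : ℕ, (n : ℝ) ≠ 4 / (4 - w))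
    (ℓ : ℕ) (hℓ : 4 / (4 - w) < (ℓ : ℝ))
    (a : ℝ) (ha : a ∈ Set.Icc ((ℓ : ℝ) * w) (4 * ((ℓ : ℝ) - 1)))
    (r : ℝ) (hr : r ∈ Set.Icc (0 : ℝ) 1)
    (heq : ((ℓ : ℝ) - 1) * (4 - (4 - w) * r ^ 2) + w * r ^ 2 = a) :
    8 * (ℓ : ℝ) - 2 * Real.sqrt ((4 * (ℓ : ℝ) - a) * ((4 - w) * (ℓ : ℝ)))
      ≤ ((ℓ : ℝ) - 1) * (8 - 2 * r * (4 - w)) + 2 * r * w := by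
  obtain ⟨hr0, hr1⟩ := hr
  have hA : (0:ℝ) < 4 - w := by linarith
  set L : ℝ := (ℓ : ℝ) with hL
  have h4L : 4 < (4 - w) * L := by
    have := (div_lt_iff₀ hA).mp hℓ
    linarith
  have hkey : w < (4 - w) * (L - 1) := by nlinarith
  have hL2 : (2:ℝ) ≤ L := by
    have h1 : (1:ℝ) < L := by nlinarith
    rw [hL] at h1 ⊢
    have : (1:ℕ) < ℓ := by exact_mod_cast h1
    exact_mod_cast this
  -- the quantity to compare with the square root
  set B : ℝ := 4 + r * (4 - w) * (L - 1) - r * w with hB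
  have hB0 : 0 ≤ B := by nlinarith
  have hsq : B ≤ Real.sqrt ((4 * L - a) * ((4 - w) * L)) := by
    have hy : 0 ≤ (4 * L - a) * ((4 - w) * L) := by
      have ha2 := ha.2
      have : (0:ℝ) < (4 - w) * L := by nlinarith
      nlinarith
    rw [Real.le_sqrt hB0]
    · nlinarith [sq_nonneg (1 - r), sq_nonneg r, mul_pos hw0 hA,
        mul_nonneg (mul_nonneg hw0.le hA.le) (by linarith : (0:ℝ) ≤ L - 2),
        sq_nonneg ((1 - r) * (L - 1))]
    · exact hy
  nlinarith [hsq]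
end

section
/- There exists c > 0, depending only on w, such that for every integer ℓ ≥ 1 and all r, ρ ∈ [0,1] satisfying the equal-area equation ℓ(4−(4−w)r²) = (ℓ+1)(4−(4−w)ρ²) and the equal-surface-tension equation ℓ(8−2r(4−w)) = (ℓ+1)(8−2ρ(4−w)), one has r ≥ c. -/
/-!
Write `s = 4 - (4 - w) r`, so that the surface tension of a type-2 stack of `ℓ` layers is `2ℓs`.
Eliminating `ρ` from the two balance equations leaves `s² = 4w(1 + 1/ℓ)`. Since `0 ≤ s ≤ 4`,
this forces `ℓ ≥ w/(4 - w) = ℓ* - 1`, and by non-degeneracy `ℓ ≥ ℓ₀ := ⌈w/(4 - w)⌉ > w/(4 - w)`.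
Hence `s² ≤ 4w(1 + 1/ℓ₀) < 16` uniformly in `ℓ`, which keeps `s` away from `4` and `r` away
from `0`.
-/

open Real

def stackArea (w ℓ r : ℝ) : ℝ := ℓ * (4 - (4 - w) * r ^ 2)

def stackSurfaceTension (w ℓ r : ℝ) : ℝ := ℓ * (8 - 2 * r * (4 - w))

theorem sq_eq_of_stackArea_eq_of_stackSurfaceTension_eq {w ℓ r ρ : ℝ} (hℓ : ℓ ≠ 0)
    (harea : stackArea w ℓ r = stackArea w (ℓ + 1) ρ)
    (hsurf : stackSurfaceTension w ℓ r = stackSurfaceTension w (ℓ + 1) ρ) :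
    (4 - (4 - w) * r) ^ 2 = 4 * w * (1 + ℓ⁻¹) := by
  unfold stackArea at harea
  unfold stackSurfaceTension at hsurf
  have h : ℓ * (ℓ * (4 - (4 - w) * r) ^ 2 - 4 * w * (ℓ + 1)) = 0 := by
    linear_combination (-(4 - w) * ℓ * (ℓ + 1)) * harea +
      (ℓ * ((ℓ + 1) * (4 - w) * ρ + ℓ * (4 - w) * r + 4) / 2) * hsurf
  have h' := (mul_eq_zero.1 h).resolve_left hℓ
  field_simp
  linear_combination h'

section Threshold

variable {w x : ℝ}

theorem four_mul_one_add_inv_le_sixteen_iff (hw4 : w < 4) (hx : 0 < x) :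
    4 * w * (1 + x⁻¹) ≤ 16 ↔ w / (4 - w) ≤ x := by
  rw [div_le_iff₀ (sub_pos.2 hw4), ← mul_le_mul_iff_of_pos_right hx]
  field_simp
  constructor <;> intro h <;> linarith

theorem four_mul_one_add_inv_lt_sixteen_iff (hw4 : w < 4) (hx : 0 < x) :
    4 * w * (1 + x⁻¹) < 16 ↔ w / (4 - w) < x := by
  rw [div_lt_iff₀ (sub_pos.2 hw4), ← mul_lt_mul_iff_of_pos_right hx]
  field_simp
  constructor <;> intro h <;> linarith

end Threshold

theorem div_sub_lt_natCeil {w : ℝ} (hw4 : w < 4) (hnd : ∀ n : ℕ, (n : ℝ) ≠ 4 / (4 - w)) :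
    w / (4 - w) < ⌈w / (4 - w)⌉₊ := by
  refine (Nat.le_ceil _).lt_of_ne fun h => hnd (⌈w / (4 - w)⌉₊ + 1) ?_
  have : (4 - w) ≠ 0 := (sub_pos.2 hw4).ne'
  rw [Nat.cast_add_one, ← h]
  field_simp
  ring

/-- there is `c > 0`, depending only on `w`, such that for every integer
`ℓ ≥ 1` and all radii `r, ρ ∈ [0,1]` satisfying the equal-area equation
`ℓ(4−(4−w)r²) = (ℓ+1)(4−(4−w)ρ²)` and the equal-surface-tension equation
`ℓ(8−2r(4−w)) = (ℓ+1)(8−2ρ(4−w))`, one has `r ≥ c`. -/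
theorem transition_radius_bounded_below (w : ℝ) (hw0 : 0 < w) (hw4 : w < 4)
    (hnd : ∀ n : ℕ, (n : ℝ) ≠ 4 / (4 - w)) :
    ∃ c : ℝ, 0 < c ∧ ∀ ℓ : ℕ, 1 ≤ ℓ → ∀ r ρ : ℝ,
      r ∈ Set.Icc (0 : ℝ) 1 → ρ ∈ Set.Icc (0 : ℝ) 1 →
      (ℓ : ℝ) * (4 - (4 - w) * r ^ 2) = ((ℓ : ℝ) + 1) * (4 - (4 - w) * ρ ^ 2) →
      (ℓ : ℝ) * (8 - 2 * r * (4 - w)) = ((ℓ : ℝ) + 1) * (8 - 2 * ρ * (4 - w)) →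
      c ≤ r := by
  have ha : 0 < 4 - w := sub_pos.2 hw4
  set ℓ₀ := ⌈w / (4 - w)⌉₊
  have hℓ₀ : w / (4 - w) < ℓ₀ := div_sub_lt_natCeil hw4 hnd
  have hℓ₀pos : (0 : ℝ) < ℓ₀ := (div_pos hw0 ha).trans hℓ₀
  set X := 4 * w * (1 + (ℓ₀ : ℝ)⁻¹)
  have hX : √X < 4 :=
    (sqrt_lt' four_pos).2 <| by
      norm_num [X, (four_mul_one_add_inv_lt_sixteen_iff hw4 hℓ₀pos).2 hℓ₀]
  refine ⟨(4 - √X) / (4 - w), div_pos (sub_pos.2 hX) ha, ?_⟩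
  rintro ℓ hℓ r ρ ⟨hr0, hr1⟩ - harea hsurf
  have hℓpos : (0 : ℝ) < ℓ := by exact_mod_cast hℓ
  have hs := sq_eq_of_stackArea_eq_of_stackSurfaceTension_eq hℓpos.ne' harea hsurf
  have hs16 : (4 - (4 - w) * r) ^ 2 ≤ 16 := by
    have : (4 - w) * r ≤ 4 - w := mul_le_of_le_one_right ha.le hr1
    nlinarith [mul_nonneg ha.le hr0]
  have hℓ₀ℓ : (ℓ₀ : ℝ) ≤ ℓ := by
    exact_mod_cast Nat.ceil_le.2 ((four_mul_one_add_inv_le_sixteen_iff hw4 hℓpos).1 (hs ▸ hs16))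
  have hsX : (4 - (4 - w) * r) ^ 2 ≤ X := by
    rw [hs]
    unfold X
    gcongr
  have := le_sqrt_of_sq_le hsX
  rw [div_le_iff₀ ha]
  linarith
end

section
/- Let X_1, …, X_n be i.i.d. integer-valued random variables and S_k := X_1 + ⋯ + X_k. Then for every integer n ≥ 1 and every integer y ≥ 1: P(S_k > 0 for all 1 ≤ k ≤ n, and S_n = y) ≤ (y/n)·P(S_n = y). -/
/-!
Cycle lemma argument. Put `T m = X_0 + ⋯ + X_{m-1}` and extend the increments `n`-periodically,
so that `T (j + n) = T j + y` on `{S_n = y}`. If the walks started at two shifts `j < j'` both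
stay positive, then `T j < T j' < T j + y`; hence the values `T j` over such shifts are distinct
and lie in one window of length `y`, so at most `y` of the `n` cyclic shifts of
`(X_0, …, X_{n-1})` stay positive. The i.i.d. vector is invariant in law under cyclic shifts,
so each shift stays positive with the same probability, and taking expectations gives
`n · P(ladder, S_n = y) ≤ y · P(S_n = y)`.
-/

open MeasureTheory ProbabilityTheory Finset

theorem Function.Periodic.sum_range_add {M : Type*} [AddCancelCommMonoid M] {f : ℕ → M} {n : ℕ}
    (hf : Function.Periodic f n) (m : ℕ) :
    ∑ i ∈ range n, f (m + i) = ∑ i ∈ range n, f i := by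
  induction m with
  | zero => simp
  | succ m ih =>
    have h := (sum_range_succ (fun i ↦ f (m + i)) n).symm.trans
      (sum_range_succ' (fun i ↦ f (m + i)) n)
    rw [hf m, add_zero] at h
    rw [← ih, add_right_cancel h]
    exact sum_congr rfl fun i _ ↦ congrArg f (by omega)

def PartialSumsPos (f : ℕ → ℤ) (n : ℕ) : Prop :=
  ∀ k, 1 ≤ k → k ≤ n → 0 < ∑ i ∈ range k, f i

instance (f : ℕ → ℤ) (n : ℕ) : Decidable (PartialSumsPos f n) := by
  unfold PartialSumsPos; infer_instance

lemma sum_range_lt_of_partialSumsPos {f : ℕ → ℤ} {n j m : ℕ}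
    (h : PartialSumsPos (fun i ↦ f (j + i)) n) (hjm : j < m) (hmn : m ≤ j + n) :
    ∑ i ∈ range j, f i < ∑ i ∈ range m, f i := by
  obtain ⟨k, rfl⟩ := Nat.exists_eq_add_of_lt hjm
  rw [add_assoc, sum_range_add]
  linarith [h (k + 1) (by omega) (by omega)]

/-- The cycle lemma. -/
theorem card_filter_partialSumsPos_shift_le {f : ℕ → ℤ} {n y : ℕ} (hf : Function.Periodic f n)
    (hsum : ∑ i ∈ range n, f i = y) :
    #{j ∈ range n | PartialSumsPos (fun i ↦ f (j + i)) n} ≤ y := by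
  set G := {j ∈ range n | PartialSumsPos (fun i ↦ f (j + i)) n}
  set T : ℕ → ℤ := fun m ↦ ∑ i ∈ range m, f i
  rcases G.eq_empty_or_nonempty with hG | hG
  · simp [hG]
  have hpos {j} (hj : j ∈ G) := (mem_filter.mp hj).2
  have hmono : StrictMonoOn T G := fun j hj j' hj' hlt ↦
    sum_range_lt_of_partialSumsPos (hpos hj) hlt (by grind)
  have hwrap {j j'} (hj : j ∈ G) (hj' : j' ∈ G) (hle : j ≤ j') : T j' < T j + y := by
    have hperiod : T (j + n) = T j + y := by
      simp only [T, sum_range_add, hf.sum_range_add, hsum]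
    rw [← hperiod]
    exact sum_range_lt_of_partialSumsPos (hpos hj') (by grind) (by omega)
  calc #G = #(G.image T) := (card_image_of_injOn hmono.injOn).symm
    _ ≤ #(Ico (T (G.min' hG)) (T (G.min' hG) + y)) := by
      refine card_le_card fun t ht ↦ ?_
      obtain ⟨j, hj, rfl⟩ := mem_image.mp ht
      have hmin := G.min'_le j hj
      exact mem_Ico.mpr ⟨hmono.monotoneOn (G.min'_mem hG) hj hmin,
        hwrap (G.min'_mem hG) hj hmin⟩
    _ = y := by simp

section LadderSet

variable {n : ℕ}

/-- Indexing by `ZMod n` makes the cyclic shifts of `v` the functions `v ∘ (j + ·)`. -/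
def ladderSet (n : ℕ) (y : ℤ) : Set (ZMod n → ℤ) :=
  {v | PartialSumsPos (fun i ↦ v i) n ∧ ∑ i ∈ range n, v i = y}

lemma periodic_comp_natCast (v : ZMod n → ℤ) : Function.Periodic (fun i : ℕ ↦ v i) n :=
  fun i ↦ by simp

lemma comp_addLeft_mem_ladderSet_iff (v : ZMod n → ℤ) (j : ℕ) (y : ℤ) :
    v ∘ ((j : ZMod n) + ·) ∈ ladderSet n y ↔
      PartialSumsPos (fun i ↦ v ↑(j + i)) n ∧ ∑ i ∈ range n, v i = y := by
  simp only [ladderSet, Set.mem_ofPred_eq, Function.comp_def, ← Nat.cast_add,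
    (periodic_comp_natCast v).sum_range_add]

lemma sum_indicator_ladderSet_comp_addLeft_le (y : ℕ) (v : ZMod n → ℤ) :
    ∑ j ∈ range n, (ladderSet n y).indicator 1 (v ∘ ((j : ZMod n) + ·)) ≤
      (y : ENNReal) * {v : ZMod n → ℤ | ∑ i ∈ range n, v i = y}.indicator 1 v := by
  classical
  by_cases hv : ∑ i ∈ range n, v i = y
  · simp only [Set.indicator_apply, Pi.one_apply, comp_addLeft_mem_ladderSet_iff, hv, and_true,
      sum_boole, Set.mem_ofPred_eq, if_true, mul_one]
    exact_mod_cast card_filter_partialSumsPos_shift_le (periodic_comp_natCast v) hv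
  · simp [comp_addLeft_mem_ladderSet_iff, hv]

lemma sum_range_comp_val_natCast {M : Type*} [AddCommMonoid M] (s : ℕ → M) {k : ℕ}
    (hk : k ≤ n) : ∑ i ∈ range k, s (i : ZMod n).val = ∑ i ∈ range k, s i :=
  sum_congr rfl fun i hi ↦ by rw [ZMod.val_cast_of_lt (by grind)]

lemma comp_val_mem_ladderSet_iff (s : ℕ → ℤ) (y : ℤ) :
    (fun i : ZMod n ↦ s i.val) ∈ ladderSet n y ↔
      PartialSumsPos s n ∧ ∑ i ∈ range n, s i = y := by
  unfold ladderSet PartialSumsPos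
  simp only [Set.mem_ofPred_eq]
  exact and_congr (forall₃_congr fun k _ hk ↦ by rw [sum_range_comp_val_natCast s hk])
    (by rw [sum_range_comp_val_natCast s le_rfl])

theorem measure_ladderSet_le [NeZero n] (P : Measure (ZMod n → ℤ))
    (hP : ∀ j : ZMod n, MeasurePreserving (fun v ↦ v ∘ (j + ·)) P P) (y : ℕ) :
    n * P (ladderSet n y) ≤ y * P {v | ∑ i ∈ range n, v i = y} := by
  calc (n : ENNReal) * P (ladderSet n y)
      = ∑ j ∈ range n, ∫⁻ v, (ladderSet n y).indicator 1 (v ∘ ((j : ZMod n) + ·)) ∂P := by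
        simp only [(hP _).lintegral_comp .of_discrete, lintegral_indicator_one .of_discrete,
          sum_const, card_range, nsmul_eq_mul]
    _ = ∫⁻ v, ∑ j ∈ range n, (ladderSet n y).indicator 1 (v ∘ ((j : ZMod n) + ·)) ∂P :=
        (lintegral_finsetSum _ fun _ _ ↦ .of_discrete).symm
    _ ≤ ∫⁻ v, y * {v : ZMod n → ℤ | ∑ i ∈ range n, v i = y}.indicator 1 v ∂P :=
        lintegral_mono (sum_indicator_ladderSet_comp_addLeft_le y)
    _ = y * P {v | ∑ i ∈ range n, v i = y} := by
        rw [lintegral_const_mul _ .of_discrete, lintegral_indicator_one .of_discrete]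

end LadderSet

lemma measurePreserving_pi_comp_equiv {ι β : Type*} [Fintype ι] [MeasurableSpace β]
    (ν : Measure β) [SigmaFinite ν] (e : ι ≃ ι) :
    MeasurePreserving (fun v : ι → β ↦ v ∘ e) (Measure.pi fun _ ↦ ν) (Measure.pi fun _ ↦ ν) := by
  convert measurePreserving_piCongrLeft (fun _ ↦ ν) e.symm
  ext v
  simp [MeasurableEquiv.piCongrLeft, Equiv.piCongrLeft_apply_eq_cast]

lemma map_eq_pi_of_iIndepFun_of_identDistrib {Ω ι κ β : Type*} [MeasurableSpace Ω]
    [MeasurableSpace β] {μ : Measure Ω} [Fintype ι] {X : κ → Ω → β} {k₀ : κ}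
    (hindep : iIndepFun X μ) (hident : ∀ k, IdentDistrib (X k) (X k₀) μ μ)
    {g : ι → κ} (hg : g.Injective) :
    μ.map (fun ω i ↦ X (g i) ω) = Measure.pi fun _ ↦ μ.map (X k₀) := by
  rw [(hindep.precomp hg).map_fun_eq_pi_map fun i ↦ (hident (g i)).aemeasurable_fst]
  simp only [(hident _).map_eq]

theorem strict_ladder_bound_general {Ω : Type*} [MeasurableSpace Ω] (μ : Measure Ω)
    [IsProbabilityMeasure μ] (X : ℕ → Ω → ℤ)
    (hindep : iIndepFun X μ)
    (hident : ∀ i, IdentDistrib (X i) (X 0) μ μ)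
    (n : ℕ) (hn : 1 ≤ n) (y : ℕ) :
    μ {ω | (∀ k, 1 ≤ k → k ≤ n → 0 < ∑ i ∈ Finset.range k, X i ω) ∧
        (∑ i ∈ Finset.range n, X i ω) = (y : ℤ)}
      ≤ ((y : ENNReal) / (n : ENNReal)) *
        μ {ω | (∑ i ∈ Finset.range n, X i ω) = (y : ℤ)} := by
  have : NeZero n := ⟨by omega⟩
  set Y : Ω → ZMod n → ℤ := fun ω i ↦ X i.val ω
  have hY : AEMeasurable Y μ := aemeasurable_pi_lambda _ fun i ↦ (hident _).aemeasurable_fst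
  have hlaw : μ.map Y = Measure.pi fun _ ↦ μ.map (X 0) :=
    map_eq_pi_of_iIndepFun_of_identDistrib hindep hident (ZMod.val_injective n)
  have hbound := measure_ladderSet_le (μ.map Y)
    (fun j ↦ hlaw ▸ measurePreserving_pi_comp_equiv _ (Equiv.addLeft j)) y
  rw [Measure.map_apply_of_aemeasurable hY .of_discrete,
    Measure.map_apply_of_aemeasurable hY .of_discrete] at hbound
  have hladder : Y ⁻¹' ladderSet n y = {ω | (∀ k, 1 ≤ k → k ≤ n → 0 < ∑ i ∈ range k, X i ω) ∧
      ∑ i ∈ range n, X i ω = y} := by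
    ext ω; exact comp_val_mem_ladderSet_iff (X · ω) y
  have hsum : Y ⁻¹' {v | ∑ i ∈ range n, v i = y} = {ω | ∑ i ∈ range n, X i ω = y} := by
    ext ω
    exact iff_of_eq (congrArg (· = (y : ℤ)) (sum_range_comp_val_natCast (X · ω) le_rfl))
  rw [hladder, hsum] at hbound
  rw [← ENNReal.mul_div_right_comm, ENNReal.le_div_iff_mul_le (by simp [NeZero.ne n]) (by simp),
    mul_comm]
  exact hbound

/-- if `X_1, X_2, …` are i.i.d. integer-valued random variables with
partial sums `S_k = X_1 + ⋯ + X_k`, then for every `n ≥ 1` and every integer `y ≥ 1`,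
`P(S_k > 0 for all 1 ≤ k ≤ n, S_n = y) ≤ (y/n)·P(S_n = y)`. -/
theorem strict_ladder_bound {Ω : Type*} [MeasurableSpace Ω] (μ : Measure Ω)
    [IsProbabilityMeasure μ] (X : ℕ → Ω → ℤ) (hmeas : ∀ i, Measurable (X i))
    (hindep : iIndepFun X μ)
    (hident : ∀ i, IdentDistrib (X i) (X 0) μ μ)
    (n : ℕ) (hn : 1 ≤ n) (y : ℕ) (hy : 1 ≤ y) :
    μ {ω | (∀ k, 1 ≤ k → k ≤ n → 0 < ∑ i ∈ Finset.range k, X i ω) ∧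
        (∑ i ∈ Finset.range n, X i ω) = (y : ℤ)}
      ≤ ((y : ENNReal) / (n : ENNReal)) *
        μ {ω | (∑ i ∈ Finset.range n, X i ω) = (y : ℤ)} :=
  strict_ladder_bound_general μ X hindep hident n hn y
end

section
/- There exists c₁ < ∞, depending only on c₀ and ν, such that for all sufficiently large β and every integer y ≥ 1: ∑_{n=1}^∞ P_{β,0}( Z_k > 0 for all 1 ≤ k ≤ n, and Z_n = y ) ≤ c₁. -/
open scoped ENNReal Classical
open MeasureTheory

/-- `P_{β,0}(Z_k > 0 for all 1 ≤ k ≤ n, Z_n = y)` for the random walk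
`Z_k = x_1 + ⋯ + x_k` whose i.i.d. steps have law `μ`, written as a sum over the first
`n` steps `x : Fin n → ℤ`. -/
noncomputable def strictPathProb (μ : Measure ℤ) (n : ℕ) (y : ℤ) : ℝ≥0∞ :=
  ∑' x : Fin n → ℤ, (∏ i, μ {x i}) *
    (if (∀ k, 1 ≤ k → k ≤ n →
          (0 : ℤ) < ∑ i : Fin n, (if (i : ℕ) < k then x i else 0)) ∧
        (∑ i : Fin n, x i) = y
      then 1 else 0)

/-! ### Auxiliary material -/

/-- The partial sum of the first `k` coordinates of `x : Fin N → ℤ`. -/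
def psum {N : ℕ} (x : Fin N → ℤ) (k : ℕ) : ℤ :=
  ∑ i : Fin N, (if (i : ℕ) < k then x i else 0)

lemma psum_total {N : ℕ} (x : Fin N → ℤ) : psum x N = ∑ i, x i :=
  Finset.sum_congr rfl fun i _ => if_pos i.isLt

lemma measure_tsum_one (μ : Measure ℤ) [IsProbabilityMeasure μ] :
    ∑' z : ℤ, μ {z} = 1 := by
  rw [← measure_univ (μ := μ), ← Set.iUnion_of_singleton ℤ,
    measure_iUnion (fun a b hab => by simpa using hab)
      (fun z => measurableSet_singleton z)]

lemma psum_castLE {m N : ℕ} (h : m ≤ N) (x : Fin N → ℤ) {j : ℕ} (hj : j ≤ m) :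
    psum (fun i : Fin m => x (Fin.castLE h i)) j = psum x j := by
  induction N, h using Nat.le_induction with
  | base => rfl
  | succ N hmN ih =>
    have h1 : (fun i : Fin m => x (Fin.castLE (by omega) i))
        = (fun i : Fin m => (fun i' : Fin N => x i'.castSucc) (Fin.castLE hmN i)) := rfl
    rw [h1, ih (fun i' : Fin N => x i'.castSucc)]
    unfold psum
    rw [Fin.sum_univ_castSucc]
    have : ¬ ((Fin.last N : ℕ) < j) := by simp; omega
    simp only [Fin.coe_castSucc, this, if_neg, if_false, add_zero]

/-- Extending a cylinder event from `Fin m` to `Fin N` does not change its probability. -/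
lemma ext_lemma (μ : Measure ℤ) [IsProbabilityMeasure μ] {m N : ℕ} (h : m ≤ N)
    (g : (Fin m → ℤ) → ℝ≥0∞) :
    ∑' x : Fin m → ℤ, (∏ i, μ {x i}) * g x
      = ∑' x : Fin N → ℤ, (∏ i, μ {x i}) *
          g (fun i => x (Fin.castLE h i)) := by
  induction N, h using Nat.le_induction with
  | base => rfl
  | succ N hmN ih =>
    rw [ih]
    rw [← Equiv.tsum_eq (show (Fin N → ℤ) × ℤ ≃ (Fin (N+1) → ℤ) from
      ⟨fun p => Fin.snoc p.1 p.2, fun x => (Fin.init x, x (Fin.last N)),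
        fun p => by simp, fun x => by simp⟩)]
    rw [ENNReal.tsum_prod']
    simp only [Equiv.coe_fn_mk]
    have key : ∀ (a : Fin N → ℤ) (z : ℤ),
        (∏ i, μ {(Fin.snoc a z : Fin (N+1) → ℤ) i}) *
          g (fun i => (Fin.snoc a z : Fin (N+1) → ℤ)
              (Fin.castLE (hmN.trans (Nat.le_succ N)) i))
        = ((∏ i, μ {a i}) * g (fun i => a (Fin.castLE hmN i))) * μ {z} := by
      intro a z
      have hprod : (∏ i, μ {(Fin.snoc a z : Fin (N+1) → ℤ) i})
          = (∏ i : Fin N, μ {a i}) * μ {z} := by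
        rw [Fin.prod_univ_castSucc]
        simp
      have hCg : (fun i : Fin m => (Fin.snoc a z : Fin (N+1) → ℤ)
            (Fin.castLE (hmN.trans (Nat.le_succ N)) i))
          = (fun i => a (Fin.castLE hmN i)) := by
        funext i
        have h2 : Fin.castLE (hmN.trans (Nat.le_succ N)) i
            = Fin.castSucc (Fin.castLE hmN i) := rfl
        rw [h2, Fin.snoc_castSucc]
      rw [hprod, hCg]; ring
    have hsum : ∀ a : Fin N → ℤ,
        (∑' (z : ℤ), (∏ i, μ {(Fin.snoc a z : Fin (N+1) → ℤ) i}) *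
          g (fun i => (Fin.snoc a z : Fin (N+1) → ℤ)
              (Fin.castLE (hmN.trans (Nat.le_succ N)) i)))
        = (∏ i, μ {a i}) * g (fun i => a (Fin.castLE hmN i)) := by
      intro a
      rw [tsum_congr (key a), ENNReal.tsum_mul_left, measure_tsum_one, mul_one]
    exact (tsum_congr fun a => (hsum a).symm)

/-- Total mass of the product measure on `Fin N → ℤ` is `1`. -/
lemma mass_one (μ : Measure ℤ) [IsProbabilityMeasure μ] (N : ℕ) :
    ∑' x : Fin N → ℤ, (∏ i, μ {x i}) = 1 := by
  have h := ext_lemma μ (Nat.zero_le N) (fun _ => 1)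
  simp only [mul_one] at h
  rw [← h]
  have h0 : ∀ x : Fin 0 → ℤ, (∏ i, μ {x i}) = 1 := by intro x; simp
  rw [tsum_congr h0]
  exact tsum_eq_single (fun i => (0:ℤ))
    (fun b hb => absurd (Subsingleton.elim b _) hb) -- const fn 1, tsum over unique space

lemma psum_rev {m : ℕ} (x : Fin m → ℤ) {k : ℕ} (hk : k ≤ m) :
    psum (fun i => x i.rev) k + psum x (m - k) = psum x m := by
  unfold psum
  have h1 : ∑ i : Fin m, (if (i : ℕ) < k then x i.rev else 0)
      = ∑ i : Fin m, (if ((i.rev : ℕ)) < k then x i else 0) := by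
    refine Fintype.sum_equiv Fin.revPerm _ _ fun i => ?_
    simp [Fin.rev_rev]
  rw [h1, ← Finset.sum_add_distrib]
  refine Finset.sum_congr rfl fun i _ => ?_
  have hi : (i : ℕ) < m := i.isLt
  have hrev : ((i.rev : ℕ)) = m - ((i : ℕ) + 1) := Fin.val_rev i
  by_cases hc : ((i.rev : ℕ)) < k
  · rw [if_pos hc, if_neg (by omega), if_pos hi, add_zero]
  · rw [if_neg hc, if_pos (by omega), if_pos hi, zero_add]

def revEquiv (m : ℕ) : (Fin m → ℤ) ≃ (Fin m → ℤ) where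
  toFun x := fun i => x i.rev
  invFun x := fun i => x i.rev
  left_inv x := by funext i; simp [Fin.rev_rev]
  right_inv x := by funext i; simp [Fin.rev_rev]

lemma total_rev {m : ℕ} (x : Fin m → ℤ) : (∑ i : Fin m, x i.rev) = ∑ i, x i := by
  refine Fintype.sum_equiv Fin.revPerm _ _ fun i => ?_
  simp [Fin.rev_rev]

/-- Path reversal: the probability of staying strictly positive and ending at `y`
equals the probability of staying strictly below `y` before time `m` and ending at `y`. -/
lemma reversal (μ : Measure ℤ) (m : ℕ) (y : ℤ) :
    strictPathProb μ m y = ∑' x : Fin m → ℤ, (∏ i, μ {x i}) *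
      (if (∀ j < m, psum x j < y) ∧ psum x m = y then 1 else 0) := by
  rw [strictPathProb, ← Equiv.tsum_eq (revEquiv m)]
  refine tsum_congr fun x => ?_
  have hprod : (∏ i, μ {(revEquiv m x) i}) = ∏ i, μ {x i} := by
    refine Fintype.prod_equiv Fin.revPerm _ _ fun i => ?_
    simp [revEquiv, Fin.rev_rev]
  rw [hprod]
  congr 1
  have hcond : ((∀ k, 1 ≤ k → k ≤ m →
        (0 : ℤ) < ∑ i : Fin m, (if (i : ℕ) < k then (revEquiv m x) i else 0)) ∧
      (∑ i : Fin m, (revEquiv m x) i) = y)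
      ↔ ((∀ j < m, psum x j < y) ∧ psum x m = y) := by
    have htot : (∑ i : Fin m, (revEquiv m x) i) = ∑ i, x i := total_rev x
    constructor
    · rintro ⟨h1, h2⟩
      have hy : psum x m = y := by rw [psum_total, ← htot, h2]
      refine ⟨fun j hj => ?_, hy⟩
      have hk := h1 (m - j) (by omega) (by omega)
      have hh := psum_rev x (show m - j ≤ m by omega)
      rw [show m - (m - j) = j by omega] at hh
      have : (0:ℤ) < psum (fun i => x i.rev) (m - j) := hk
      omega
    · rintro ⟨h1, h2⟩
      refine ⟨fun k hk1 hk2 => ?_, by rw [htot, ← psum_total, h2]⟩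
      have hj := h1 (m - k) (by omega)
      have hh := psum_rev x hk2
      show (0:ℤ) < psum (fun i => x i.rev) k
      omega
  simp only [hcond]

/-- After reversal and extension to a common horizon `N`, the events
"first reach level `≥ y` at time `n+1`, at value exactly `y`" are disjoint in `n`,
so the partial sums are bounded by `1`. -/
lemma partial_bound (μ : Measure ℤ) [IsProbabilityMeasure μ] (y : ℤ) (N : ℕ) :
    ∑ n ∈ Finset.range N, strictPathProb μ (n + 1) y ≤ 1 := by
  have step : ∀ n ∈ Finset.range N, strictPathProb μ (n + 1) y
      = ∑' x : Fin N → ℤ, (∏ i, μ {x i}) *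
          (if (∀ j < n + 1, psum x j < y) ∧ psum x (n + 1) = y then 1 else 0) := by
    intro n hn
    have hnN : n + 1 ≤ N := Finset.mem_range.mp hn
    rw [reversal μ (n+1) y]
    refine (ext_lemma μ hnN (fun x' : Fin (n+1) → ℤ =>
      if (∀ j < n+1, psum x' j < y) ∧ psum x' (n+1) = y then 1 else 0)).trans
      (tsum_congr fun x => ?_)
    congr 1
    have hcond : ((∀ j < n+1, psum (fun i => x (Fin.castLE hnN i)) j < y) ∧
          psum (fun i => x (Fin.castLE hnN i)) (n+1) = y)
        ↔ ((∀ j < n + 1, psum x j < y) ∧ psum x (n + 1) = y) := by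
      constructor
      · rintro ⟨h1, h2⟩
        exact ⟨fun j hj => by rw [← psum_castLE hnN x (by omega)]; exact h1 j hj,
          by rw [← psum_castLE hnN x le_rfl]; exact h2⟩
      · rintro ⟨h1, h2⟩
        exact ⟨fun j hj => by rw [psum_castLE hnN x (by omega)]; exact h1 j hj,
          by rw [psum_castLE hnN x le_rfl]; exact h2⟩
    simp only [hcond]
  rw [Finset.sum_congr rfl step, ← Summable.tsum_finsetSum (fun i _ => ENNReal.summable)]
  calc ∑' x : Fin N → ℤ, ∑ n ∈ Finset.range N, (∏ i, μ {x i}) *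
        (if (∀ j < n + 1, psum x j < y) ∧ psum x (n + 1) = y then 1 else 0)
      ≤ ∑' x : Fin N → ℤ, (∏ i, μ {x i}) := by
        refine ENNReal.tsum_le_tsum fun x => ?_
        rw [← Finset.mul_sum]
        have hsum : (∑ n ∈ Finset.range N,
            (if (∀ j < n + 1, psum x j < y) ∧ psum x (n + 1) = y then (1:ℝ≥0∞) else 0)) ≤ 1 := by
          rw [Finset.sum_boole]
          rw [show (1:ℝ≥0∞) = ((1:ℕ):ℝ≥0∞) from Nat.cast_one.symm]
          rw [Nat.cast_le]
          refine Finset.card_le_one.mpr fun a ha b hb => ?_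
          simp only [Finset.mem_filter] at ha hb
          by_contra hab
          rcases Nat.lt_or_ge a b with hlt | hge
          · have := hb.2.1 (a+1) (by omega)
            have := ha.2.2
            omega
          · have hlt : b < a := by omega
            have := ha.2.1 (b+1) (by omega)
            have := hb.2.2
            omega
        calc (∏ i, μ {x i}) * _ ≤ (∏ i, μ {x i}) * 1 := mul_le_mul_right hsum _
          _ = ∏ i, μ {x i} := mul_one _
    _ = 1 := mass_one μ N

/-- there is `c₁ < ∞`, depending only on `c₀` and `ν`, such that for all
sufficiently large `β` and every integer `y ≥ 1`,
`∑_{n ≥ 1} P_{β,0}(Z_k > 0 for all 1 ≤ k ≤ n, Z_n = y) ≤ c₁`. -/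
theorem strict_positive_walk_sum_bounded (c₀ ν : ℝ) (hc₀ : 1 ≤ c₀) (hν : 0 < ν)
    (μW : ℝ → Measure ℤ) (hprob : ∀ β, IsProbabilityMeasure (μW β))
    (hsymm : ∀ β, Measure.map (fun z : ℤ => -z) (μW β) = μW β)
    (hplo : ∀ β : ℝ, 0 < β →
      c₀⁻¹ * Real.exp (-β) ≤ ((μW β) {z : ℤ | z ≠ 0}).toReal)
    (hphi : ∀ β : ℝ, 0 < β →
      ((μW β) {z : ℤ | z ≠ 0}).toReal ≤ c₀ * Real.exp (-β))
    (htail : ∀ β : ℝ, 0 < β → ∀ z : ℤ, 2 ≤ |z| →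
      ((μW β) {z}).toReal ≤
        ((μW β) {x : ℤ | x ≠ 0}).toReal * Real.exp (-ν * β * (|z| : ℤ))) :
    ∃ c₁ : ℝ, ∃ β₀ : ℝ, ∀ β : ℝ, β₀ ≤ β → ∀ y : ℕ, 1 ≤ y →
      ∑' n : ℕ, strictPathProb (μW β) (n + 1) (y : ℤ) ≤ ENNReal.ofReal c₁ := by
  refine ⟨1, 1, fun β hβ y hy => ?_⟩
  haveI := hprob β
  rw [ENNReal.ofReal_one, ENNReal.tsum_eq_iSup_sum]
  refine iSup_le fun s => ?_
  calc ∑ n ∈ s, strictPathProb (μW β) (n + 1) (y : ℤ)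
      ≤ ∑ n ∈ Finset.range (s.sup id + 1), strictPathProb (μW β) (n + 1) (y : ℤ) := by
        refine Finset.sum_le_sum_of_subset fun n hn => Finset.mem_range.mpr ?_
        have : n ≤ s.sup id := Finset.le_sup (f := id) hn
        omega
    _ ≤ 1 := partial_bound (μW β) (y : ℤ) _
end
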